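/- arXiv:2604.17363 — 3 statements merged into one kernel-verified Lean document; each statement's English description precedes it below -/
import Mathlib

section
/- The infimum J₁(2) := inf{∫_ℝ |u'|² dx − (1/2)∫_ℝ u⁴ dx : u ∈ H¹(ℝ), ∫_ℝ u² dx = 1} satisfies J₁(2) ≤ −1/48. -/
open Real MeasureTheory

/-- Membership in H¹(ℝ). -/
def H1 (u : ℝ → ℝ) : Prop :=
  Differentiable ℝ u ∧ MemLp u 2 (volume : Measure ℝ) ∧
    MemLp (deriv u) 2 (volume : Measure ℝ)

/-- The energy functional of `J₁(2)`. -/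
noncomputable def E1 (u : ℝ → ℝ) : ℝ :=
  (∫ x : ℝ, (deriv u x) ^ 2) - (1 / 2) * ∫ x : ℝ, (u x) ^ 4

/-- The variational problem `J₁(2)`. -/
noncomputable def J1 : ℝ :=
  sInf {y : ℝ | ∃ u : ℝ → ℝ, H1 u ∧ (∫ x : ℝ, (u x) ^ 2) = 1 ∧ y = E1 u}

open Set Filter Topology

/-! The upper bound comes from evaluating the energy at `v x = √2 / (4 cosh (x / 4))`. The
substitution `t = tanh (x / 4)` turns `v ^ 2`, `v' ^ 2` and `v ^ 4` into the polynomial densities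
`1 / 2`, `t ^ 2 / 32` and `(1 - t ^ 2) / 16` on `(-1, 1)`, so `∫ v ^ 2 = 1`, `∫ v' ^ 2 = 1 / 48`,
`∫ v ^ 4 = 1 / 12` and `E1 v = -1 / 48`.

Since `J1` is an `sInf` of reals, the admissible energies must also be bounded below. Writing
`u x ^ 2 = ∫_{-∞}^x 2 u u'` gives `u x ^ 2 ≤ ‖u‖₂² + ‖u'‖₂²`, hence `∫ u ^ 4 ≤ 1 + ‖u'‖₂²` and
`E1 u ≥ -1 / 2` under the constraint `‖u‖₂ = 1`. -/

theorem integrable_of_hasDerivAt_of_nonneg {F g : ℝ → ℝ} {m n : ℝ}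
    (hF : ∀ x, HasDerivAt F (g x) x) (hg : ∀ x, 0 ≤ g x)
    (hbot : Tendsto F atBot (𝓝 m)) (htop : Tendsto F atTop (𝓝 n)) : Integrable g := by
  have hIoi : IntegrableOn g (Ioi 0) :=
    integrableOn_Ioi_deriv_of_nonneg' (fun x _ ↦ hF x) (fun x _ ↦ hg x) htop
  -- `x ↦ -F (-x)` has the nonnegative derivative `g (-x)` and a limit at `+∞`
  have hIio : IntegrableOn g (Iio 0) := by
    have hderiv (x : ℝ) : HasDerivAt (fun y ↦ -F (-y)) (g (-x)) x :=
      (((hF (-x)).comp x (hasDerivAt_neg x)).neg).congr_deriv (by ring)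
    have hreflect : IntegrableOn (fun x ↦ g (-x)) (Ioi (-0)) :=
      integrableOn_Ioi_deriv_of_nonneg' (fun x _ ↦ hderiv x) (fun x _ ↦ hg (-x))
        (hbot.comp tendsto_neg_atTop_atBot).neg
    simpa using hreflect.comp_neg_Iio
  rw [← integrableOn_univ, ← Iio_union_Ici (a := (0 : ℝ)), integrableOn_union,
    integrableOn_Ici_iff_integrableOn_Ioi]
  exact ⟨hIio, hIoi⟩

theorem Real.hasDerivAt_tanh (x : ℝ) : HasDerivAt tanh (1 / cosh x ^ 2) x := by
  have hcosh := (cosh_pos x).ne'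
  have h := (hasDerivAt_sinh x).div (hasDerivAt_cosh x) hcosh
  rw [show tanh = sinh / cosh from funext tanh_eq_sinh_div_cosh]
  refine h.congr_deriv ?_
  rw [← cosh_sq_sub_sinh_sq x]
  ring

theorem Real.tendsto_tanh_atTop : Tendsto tanh atTop (𝓝 1) := by
  have hexp : Tendsto (fun x ↦ exp (-(2 * x))) atTop (𝓝 0) :=
    tendsto_exp_neg_atTop_nhds_zero.comp (tendsto_id.const_mul_atTop two_pos)
  have h := ((tendsto_const_nhds (x := (1 : ℝ))).sub hexp).div (tendsto_const_nhds.add hexp)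
    (by norm_num : (1 : ℝ) + 0 ≠ 0)
  rw [sub_zero, add_zero, div_one] at h
  refine h.congr fun x ↦ ?_
  rw [Pi.div_apply, tanh_eq_sinh_div_cosh, sinh_eq, cosh_eq, exp_neg, exp_neg,
    show 2 * x = x + x by ring, exp_add]
  have := exp_pos x
  field_simp

theorem Real.tendsto_tanh_atBot : Tendsto tanh atBot (𝓝 (-1)) := by
  have h := (tendsto_tanh_atTop.comp tendsto_neg_atBot_atTop).neg
  exact h.congr fun x ↦ by simp [tanh_neg]

theorem integrable_and_integral_comp_tanh_div {P p : ℝ → ℝ} {c : ℝ} (hc : 0 < c)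
    (hP : ∀ y, HasDerivAt P (p y) y) (hp : ∀ y ∈ Ioo (-1) 1, 0 ≤ p y) :
    Integrable (fun x ↦ p (tanh (x / c)) / (c * cosh (x / c) ^ 2)) ∧
      ∫ x, p (tanh (x / c)) / (c * cosh (x / c) ^ 2) = P 1 - P (-1) := by
  have hF (x : ℝ) : HasDerivAt (fun x ↦ P (tanh (x / c)))
      (p (tanh (x / c)) / (c * cosh (x / c) ^ 2)) x := by
    refine ((hP _).comp x ((hasDerivAt_tanh _).comp x ((hasDerivAt_id' x).div_const c))).congr_deriv
      ?_
    simp only [Function.comp_apply]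
    field_simp
  have hg (x : ℝ) : 0 ≤ p (tanh (x / c)) / (c * cosh (x / c) ^ 2) :=
    div_nonneg (hp _ ⟨neg_one_lt_tanh _, tanh_lt_one _⟩) (by positivity)
  have hbot : Tendsto (fun x ↦ P (tanh (x / c))) atBot (𝓝 (P (-1))) :=
    ((hP _).continuousAt.tendsto.comp tendsto_tanh_atBot).comp (tendsto_id.atBot_div_const hc)
  have htop : Tendsto (fun x ↦ P (tanh (x / c))) atTop (𝓝 (P 1)) :=
    ((hP _).continuousAt.tendsto.comp tendsto_tanh_atTop).comp (tendsto_id.atTop_div_const hc)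
  have hint := integrable_of_hasDerivAt_of_nonneg hF hg hbot htop
  exact ⟨hint, integral_of_hasDerivAt_of_tendsto hF hint hbot htop⟩

noncomputable def soliton (x : ℝ) : ℝ := √2 / (4 * cosh (x / 4))

theorem hasDerivAt_soliton (x : ℝ) :
    HasDerivAt soliton (-(√2 * sinh (x / 4)) / (16 * cosh (x / 4) ^ 2)) x := by
  have hcosh : HasDerivAt (fun y ↦ 4 * cosh (y / 4)) (sinh (x / 4)) x :=
    (((hasDerivAt_cosh _).comp x ((hasDerivAt_id' x).div_const 4)).const_mul 4).congr_deriv (by ring)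
  refine ((hasDerivAt_const x √2).div hcosh (by positivity)).congr_deriv ?_
  field_simp
  ring

theorem deriv_soliton : deriv soliton = fun x ↦ -(√2 * sinh (x / 4)) / (16 * cosh (x / 4) ^ 2) :=
  funext fun x ↦ (hasDerivAt_soliton x).deriv

theorem differentiable_soliton : Differentiable ℝ soliton :=
  fun x ↦ (hasDerivAt_soliton x).differentiableAt

theorem continuous_deriv_soliton : Continuous (deriv soliton) := by
  rw [deriv_soliton]
  exact Continuous.div (by fun_prop) (by fun_prop) fun x ↦ by positivity

theorem integrable_and_integral_soliton_sq :
    Integrable (fun x ↦ soliton x ^ 2) ∧ ∫ x, soliton x ^ 2 = 1 := by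
  have h := integrable_and_integral_comp_tanh_div (P := fun y ↦ y / 2) (p := fun _ ↦ 1 / 2)
    four_pos (fun y ↦ (hasDerivAt_id y).div_const 2) (fun _ _ ↦ by norm_num)
  have heq : (fun x ↦ soliton x ^ 2) = fun x ↦ 1 / 2 / (4 * cosh (x / 4) ^ 2) := by
    ext x
    rw [soliton, div_pow, mul_pow, sq_sqrt zero_le_two]
    ring
  rw [heq]
  exact ⟨h.1, by norm_num [h.2]⟩

theorem integrable_and_integral_deriv_soliton_sq :
    Integrable (fun x ↦ deriv soliton x ^ 2) ∧ ∫ x, deriv soliton x ^ 2 = 1 / 48 := by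
  have h := integrable_and_integral_comp_tanh_div (P := fun y ↦ y ^ 3 / 96)
    (p := fun y ↦ y ^ 2 / 32) four_pos
    (fun y ↦ ((hasDerivAt_pow 3 y).div_const 96).congr_deriv (by ring)) (fun _ _ ↦ by positivity)
  have heq : (fun x ↦ deriv soliton x ^ 2) =
      fun x ↦ tanh (x / 4) ^ 2 / 32 / (4 * cosh (x / 4) ^ 2) := by
    ext x
    have := (cosh_pos (x / 4)).ne'
    rw [deriv_soliton, tanh_eq_sinh_div_cosh, div_pow, neg_sq, mul_pow, sq_sqrt zero_le_two]
    field_simp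
    ring
  rw [heq]
  exact ⟨h.1, by norm_num [h.2]⟩

theorem integral_soliton_pow_four : ∫ x, soliton x ^ 4 = 1 / 12 := by
  have h := integrable_and_integral_comp_tanh_div (P := fun y ↦ y / 16 - y ^ 3 / 48)
    (p := fun y ↦ (1 - y ^ 2) / 16) four_pos
    (fun y ↦ (((hasDerivAt_id y).div_const 16).sub ((hasDerivAt_pow 3 y).div_const 48)).congr_deriv
      (by ring))
    (fun y hy ↦ div_nonneg (by nlinarith [hy.1, hy.2]) (by norm_num))
  have heq : (fun x ↦ soliton x ^ 4) =
      fun x ↦ (1 - tanh (x / 4) ^ 2) / 16 / (4 * cosh (x / 4) ^ 2) := by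
    ext x
    have := (cosh_pos (x / 4)).ne'
    rw [soliton, tanh_eq_sinh_div_cosh, div_pow, mul_pow,
      show √2 ^ 4 = (√2 ^ 2) ^ 2 by ring, sq_sqrt zero_le_two]
    field_simp
    rw [cosh_sq]
    ring
  rw [heq, h.2]
  norm_num

namespace H1

variable {u : ℝ → ℝ}

theorem integrable_sq (hu : H1 u) : Integrable (fun x ↦ u x ^ 2) :=
  (memLp_two_iff_integrable_sq hu.2.1.1).mp hu.2.1

theorem integrable_deriv_sq (hu : H1 u) : Integrable (fun x ↦ deriv u x ^ 2) :=
  (memLp_two_iff_integrable_sq hu.2.2.1).mp hu.2.2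

theorem sq_le_integral_sq_add_integral_deriv_sq (hu : H1 u) (x : ℝ) :
    u x ^ 2 ≤ (∫ y, u y ^ 2) + ∫ y, deriv u y ^ 2 := by
  have hderiv (y : ℝ) : HasDerivAt (fun y ↦ u y ^ 2) (2 * (u y * deriv u y)) y :=
    ((hu.1 y).hasDerivAt.pow 2).congr_deriv (by ring)
  have hint : Integrable (fun y ↦ 2 * (u y * deriv u y)) :=
    (hu.2.1.integrable_mul hu.2.2).const_mul 2
  have hsum := hu.integrable_sq.add hu.integrable_deriv_sq
  have hbot : Tendsto (fun y ↦ u y ^ 2) atBot (𝓝 0) :=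
    tendsto_zero_of_hasDerivAt_of_integrableOn_Iic (a := 0) (fun y _ ↦ hderiv y)
      hint.integrableOn hu.integrable_sq.integrableOn
  calc u x ^ 2 = ∫ y in Iic x, 2 * (u y * deriv u y) := by
        rw [integral_Iic_of_hasDerivAt_of_tendsto' (fun y _ ↦ hderiv y) hint.integrableOn hbot,
          sub_zero]
    _ ≤ ∫ y in Iic x, (u y ^ 2 + deriv u y ^ 2) :=
        setIntegral_mono hint.integrableOn hsum.integrableOn fun y ↦ by
          nlinarith [sq_nonneg (u y - deriv u y)]
    _ ≤ ∫ y, (u y ^ 2 + deriv u y ^ 2) :=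
        setIntegral_le_integral hsum (Eventually.of_forall fun y ↦ by positivity)
    _ = (∫ y, u y ^ 2) + ∫ y, deriv u y ^ 2 := integral_add hu.integrable_sq hu.integrable_deriv_sq

theorem integral_pow_four_le (hu : H1 u) :
    ∫ x, u x ^ 4 ≤ ((∫ x, u x ^ 2) + ∫ x, deriv u x ^ 2) * ∫ x, u x ^ 2 := by
  by_cases hint : Integrable (fun x ↦ u x ^ 4)
  · rw [← integral_const_mul]
    refine integral_mono hint (hu.integrable_sq.const_mul _) fun x ↦ ?_
    have := hu.sq_le_integral_sq_add_integral_deriv_sq x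
    nlinarith [sq_nonneg (u x)]
  · rw [integral_undef hint]
    have : 0 ≤ ∫ x, u x ^ 2 := integral_nonneg fun x ↦ sq_nonneg (u x)
    have : 0 ≤ ∫ x, deriv u x ^ 2 := integral_nonneg fun x ↦ sq_nonneg (deriv u x)
    positivity

theorem neg_half_le_E1 (hu : H1 u) (hnorm : ∫ x, u x ^ 2 = 1) : -(1 / 2) ≤ E1 u := by
  have hquartic := hu.integral_pow_four_le
  have : 0 ≤ ∫ x, deriv u x ^ 2 := integral_nonneg fun x ↦ sq_nonneg (deriv u x)
  rw [hnorm, mul_one] at hquartic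
  rw [E1]
  linarith

end H1

theorem stmt5 : J1 ≤ -(1 / 48) := by
  have hbdd : BddBelow {y : ℝ | ∃ u : ℝ → ℝ, H1 u ∧ (∫ x : ℝ, (u x) ^ 2) = 1 ∧ y = E1 u} :=
    ⟨-(1 / 2), by rintro _ ⟨u, hu, hnorm, rfl⟩; exact hu.neg_half_le_E1 hnorm⟩
  have hsoliton : H1 soliton :=
    ⟨differentiable_soliton,
      (memLp_two_iff_integrable_sq differentiable_soliton.continuous.aestronglyMeasurable).mpr
        integrable_and_integral_soliton_sq.1,
      (memLp_two_iff_integrable_sq continuous_deriv_soliton.aestronglyMeasurable).mpr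
        integrable_and_integral_deriv_soliton_sq.1⟩
  have henergy : E1 soliton = -(1 / 48) := by
    rw [E1, integrable_and_integral_deriv_soliton_sq.2, integral_soliton_pow_four]
    norm_num
  exact csInf_le hbdd ⟨soliton, hsoliton, integrable_and_integral_soliton_sq.2, henergy.symm⟩
end

section
/- For any real numbers α < β and any f ∈ C¹([α,β]), the interpolation inequality ‖f‖²_{L^∞[α,β]} ≤ 2‖f‖_{L²[α,β]}·‖f'‖_{L²[α,β]} + (2/(β−α))‖f‖²_{L²[α,β]} holds. -/
/-!
Let `y` be a point where `f²` is at most its mean value `(β - α)⁻¹ ∫ f²`. The fundamental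
theorem of calculus applied to `f²`, whose derivative is `2 f f'`, gives
`f(x)² ≤ f(y)² + 2 ∫ |f f'|`, and Cauchy–Schwarz bounds `∫ |f f'|` by `‖f‖₂ ‖f'‖₂`.
This even gives the constant `1 / (β - α)` in place of `2 / (β - α)`.
-/

open Real MeasureTheory intervalIntegral Set

theorem integral_abs_mul_le_sqrt_mul_sqrt {X : Type*} [MeasurableSpace X] {μ : Measure X}
    {f g : X → ℝ} (hf : MemLp f 2 μ) (hg : MemLp g 2 μ) :
    ∫ x, |f x * g x| ∂μ ≤ √(∫ x, f x ^ 2 ∂μ) * √(∫ x, g x ^ 2 ∂μ) := by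
  have hf' : MemLp f (ENNReal.ofReal 2) μ := by rwa [ENNReal.ofReal_ofNat]
  have hg' : MemLp g (ENNReal.ofReal 2) μ := by rwa [ENNReal.ofReal_ofNat]
  have holder := integral_mul_norm_le_Lp_mul_Lq HolderConjugate.two_two hf' hg'
  simpa only [norm_eq_abs, ← abs_mul, rpow_two, sq_abs, ← sqrt_eq_rpow] using holder

theorem ContinuousOn.memLp_restrict_of_isCompact {X E : Type*} [TopologicalSpace X] [T2Space X]
    [MeasurableSpace X] [OpensMeasurableSpace X] [NormedAddCommGroup E] {μ : Measure X}
    [IsFiniteMeasureOnCompacts μ] {s : Set X} {f : X → E} (hs : IsCompact s)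
    (hf : ContinuousOn f s) (p : ENNReal) : MemLp f p (μ.restrict s) := by
  have : IsFiniteMeasure (μ.restrict s) := isFiniteMeasure_restrict.mpr hs.measure_ne_top
  obtain ⟨C, hC⟩ := hs.exists_bound_of_continuousOn hf
  exact .of_bound (hf.aestronglyMeasurable_of_isCompact hs hs.measurableSet) C
    (ae_restrict_of_forall_mem hs.measurableSet hC)

section Interval

variable {a b : ℝ}

theorem intervalIntegral.integral_abs_mul_le_sqrt_mul_sqrt {f g : ℝ → ℝ} (hab : a ≤ b)
    (hf : ContinuousOn f (Icc a b)) (hg : ContinuousOn g (Icc a b)) :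
    ∫ t in a..b, |f t * g t| ≤ √(∫ t in a..b, f t ^ 2) * √(∫ t in a..b, g t ^ 2) := by
  simp only [integral_of_le hab, ← integral_Icc_eq_integral_Ioc]
  exact _root_.integral_abs_mul_le_sqrt_mul_sqrt (hf.memLp_restrict_of_isCompact isCompact_Icc 2)
    (hg.memLp_restrict_of_isCompact isCompact_Icc 2)

theorem intervalIntegral.integral_comp_deriv_eq_comp_derivWithin (hab : a ≤ b) (f G : ℝ → ℝ) :
    ∫ t in a..b, G (deriv f t) = ∫ t in a..b, G (derivWithin f (Icc a b) t) := by
  rw [integral_of_le hab, integral_of_le hab, integral_Ioc_eq_integral_Ioo,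
    integral_Ioc_eq_integral_Ioo]
  exact setIntegral_congr_fun measurableSet_Ioo fun t ht => by
    rw [derivWithin_of_mem_nhds (Icc_mem_nhds ht.1 ht.2)]

theorem exists_mem_Icc_le_integral_div {f : ℝ → ℝ} (hab : a < b)
    (hf : IntervalIntegrable f volume a b) :
    ∃ y ∈ Icc a b, f y ≤ (∫ t in a..b, f t) / (b - a) := by
  obtain ⟨y, hy, hfy⟩ := exists_le_setAverage (μ := volume) (s := Ioc a b)
    (by simp [hab]) (by simp) hf.1
  rw [← uIoc_of_le hab.le, interval_average_eq_div] at hfy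
  exact ⟨y, Ioc_subset_Icc_self hy, hfy⟩

theorem abs_sub_le_integral_abs_of_hasDerivAt {f f' : ℝ → ℝ} (hf : ContinuousOn f (Icc a b))
    (hderiv : ∀ t ∈ Ioo a b, HasDerivAt f (f' t) t) (hint : IntervalIntegrable f' volume a b)
    {x y : ℝ} (hx : x ∈ Icc a b) (hy : y ∈ Icc a b) :
    |f y - f x| ≤ ∫ t in a..b, |f' t| := by
  wlog hxy : x ≤ y generalizing x y
  · rw [abs_sub_comm]
    exact this hy hx (le_of_not_ge hxy)
  have hsub : Icc x y ⊆ Icc a b := Icc_subset_Icc hx.1 hy.2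
  calc |f y - f x|
      = |∫ t in x..y, f' t| := by
        rw [integral_eq_sub_of_hasDerivAt_of_le hxy (hf.mono hsub)
          (fun t ht => hderiv t (Ioo_subset_Ioo hx.1 hy.2 ht))
          (hint.mono_set (by simpa [uIcc_of_le hxy, uIcc_of_le (hx.1.trans (hxy.trans hy.2))]))]
    _ ≤ ∫ t in x..y, |f' t| := abs_integral_le_integral_abs hxy
    _ ≤ ∫ t in a..b, |f' t| :=
        integral_mono_interval hx.1 hxy hy.2 (.of_forall fun t => abs_nonneg _) hint.abs

theorem sq_le_integral_sq_div_add_two_mul_sqrt_mul_sqrt {f f' : ℝ → ℝ} (hab : a < b)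
    (hf : ContinuousOn f (Icc a b)) (hf' : ContinuousOn f' (Icc a b))
    (hderiv : ∀ t ∈ Ioo a b, HasDerivAt f (f' t) t) {x : ℝ} (hx : x ∈ Icc a b) :
    f x ^ 2 ≤ (∫ t in a..b, f t ^ 2) / (b - a) +
      2 * √(∫ t in a..b, f t ^ 2) * √(∫ t in a..b, f' t ^ 2) := by
  have hcont {g : ℝ → ℝ} (hg : ContinuousOn g (Icc a b)) : IntervalIntegrable g volume a b :=
    hg.intervalIntegrable_of_Icc hab.le
  obtain ⟨y, hy, hfy⟩ := exists_mem_Icc_le_integral_div (f := (f · ^ 2)) hab (hcont (hf.pow 2))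
  have hvar : |f x ^ 2 - f y ^ 2| ≤ ∫ t in a..b, |2 * (f t * f' t)| :=
    abs_sub_le_integral_abs_of_hasDerivAt (hf.pow 2)
      (fun t ht => by simpa [mul_assoc] using (hderiv t ht).pow 2)
      (hcont (continuousOn_const.mul (hf.mul hf'))) hy hx
  have hCS := integral_abs_mul_le_sqrt_mul_sqrt hab.le hf hf'
  simp only [abs_mul, abs_two, intervalIntegral.integral_const_mul] at hvar hCS
  linarith [le_abs_self (f x ^ 2 - f y ^ 2)]

end Interval

theorem stmt6 (α β : ℝ) (hab : α < β) (f : ℝ → ℝ)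
    (hf : ContDiffOn ℝ 1 f (Set.Icc α β)) :
    ∀ x ∈ Set.Icc α β,
      (f x) ^ 2 ≤
        2 * Real.sqrt (∫ t in α..β, (f t) ^ 2) *
            Real.sqrt (∫ t in α..β, (deriv f t) ^ 2) +
          (2 / (β - α)) * ∫ t in α..β, (f t) ^ 2 := by
  intro x hx
  -- `deriv f` is junk at `α` and `β`; `derivWithin f (Icc α β)` is continuous on all of `Icc α β`.
  rw [integral_comp_deriv_eq_comp_derivWithin hab.le f (· ^ 2)]
  have hbound := sq_le_integral_sq_div_add_two_mul_sqrt_mul_sqrt hab hf.continuousOn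
    (hf.continuousOn_derivWithin (uniqueDiffOn_Icc hab) le_rfl)
    (fun t ht => ((hf.differentiableOn one_ne_zero t (Ioo_subset_Icc_self ht)).hasDerivWithinAt
      ).hasDerivAt (Icc_mem_nhds ht.1 ht.2)) hx
  have hmean : 0 ≤ (∫ t in α..β, f t ^ 2) / (β - α) :=
    div_nonneg (integral_nonneg hab.le fun t _ => sq_nonneg _) (sub_pos.mpr hab).le
  rw [div_mul_eq_mul_div, mul_div_assoc]
  linarith
end

section
/- For any a ≠ 0 and x₀ ∈ ℝ, the function u(x) = √2·a/(e^{−(x−x₀)/4} + 4a²·e^{(x−x₀)/4}) is a solution of the equation −u'' − u³ = −(1/16)u on ℝ. -/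
/-!
Write `u = c / D` with `D x = e^{-t} + b e^{t}`, `t = (x - x₀) / L`. Then `L² D'' = D`, and since
`e^{-t} e^{t} = 1` also `L² D'² = D² - 4b`. Differentiating `u' = -c D' / D²` gives
`u'' = u / L² - 8 b c / (L² D³)`, and the last term is `u³` as soon as `8 b = L² c²`;
for `b = 4a²`, `c = √2 a`, `L = 4` this is `32 a² = 32 a²`.
-/

open Real

namespace SolitonProfile

variable (b L x₀ : ℝ)

noncomputable def denom (x : ℝ) : ℝ := exp (-((x - x₀) / L)) + b * exp ((x - x₀) / L)

noncomputable def denomDeriv (x : ℝ) : ℝ := (-exp (-((x - x₀) / L)) + b * exp ((x - x₀) / L)) / L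

theorem denom_pos (hb : 0 ≤ b) (x : ℝ) : 0 < denom b L x₀ x := by
  unfold denom
  positivity

theorem hasDerivAt_exp_div (s : ℝ) (x : ℝ) :
    HasDerivAt (fun x => exp (s * ((x - x₀) / L))) (s * exp (s * ((x - x₀) / L)) / L) x := by
  have hlin : HasDerivAt (fun x => s * ((x - x₀) / L)) (s * (1 / L)) x :=
    (((hasDerivAt_id x).sub_const x₀).div_const L).const_mul s
  convert hlin.exp using 1
  ring

theorem hasDerivAt_denom (x : ℝ) : HasDerivAt (denom b L x₀) (denomDeriv b L x₀ x) x := by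
  have h := (hasDerivAt_exp_div L x₀ (-1) x).add ((hasDerivAt_exp_div L x₀ 1 x).const_mul b)
  simp only [neg_one_mul, one_mul] at h
  exact h.congr_deriv (by unfold denomDeriv; ring)

theorem hasDerivAt_denomDeriv (x : ℝ) :
    HasDerivAt (denomDeriv b L x₀) (denom b L x₀ x / L ^ 2) x := by
  have h := ((hasDerivAt_exp_div L x₀ (-1) x).neg.add
    ((hasDerivAt_exp_div L x₀ 1 x).const_mul b)).div_const L
  simp only [neg_one_mul, one_mul] at h
  exact h.congr_deriv (by unfold denom; ring)

theorem sq_mul_denomDeriv_sq (hL : L ≠ 0) (x : ℝ) :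
    L ^ 2 * denomDeriv b L x₀ x ^ 2 = denom b L x₀ x ^ 2 - 4 * b := by
  have hexp : exp (-((x - x₀) / L)) * exp ((x - x₀) / L) = 1 := by
    rw [← exp_add, neg_add_cancel, exp_zero]
  unfold denom denomDeriv
  field_simp
  linear_combination (-4 * b) * hexp

variable {b} (c : ℝ)

theorem deriv_div_denom (hb : 0 ≤ b) :
    deriv (fun x => c / denom b L x₀ x) = fun x => -c * denomDeriv b L x₀ x / denom b L x₀ x ^ 2 :=
  funext fun x => by
    convert ((hasDerivAt_const x c).fun_div (hasDerivAt_denom b L x₀ x)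
      (denom_pos b L x₀ hb x).ne').deriv using 1
    ring

theorem deriv_deriv_div_denom (hb : 0 ≤ b) (hL : L ≠ 0) (x : ℝ) :
    deriv (deriv fun x => c / denom b L x₀ x) x =
      c / denom b L x₀ x / L ^ 2 - 8 * b * c / (L ^ 2 * denom b L x₀ x ^ 3) := by
  have hD := (denom_pos b L x₀ hb x).ne'
  have hnum := (hasDerivAt_denomDeriv b L x₀ x).const_mul (-c)
  have hden := (hasDerivAt_denom b L x₀ x).fun_pow 2
  rw [deriv_div_denom L x₀ c hb, (hnum.fun_div hden (pow_ne_zero 2 hD)).deriv]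
  field_simp
  linear_combination (2 * c * denom b L x₀ x) * sq_mul_denomDeriv_sq b L x₀ hL x

theorem deriv_deriv_add_cube (hb : 0 ≤ b) (hL : L ≠ 0) (hbc : 8 * b = L ^ 2 * c ^ 2) (x : ℝ) :
    deriv (deriv fun x => c / denom b L x₀ x) x + (c / denom b L x₀ x) ^ 3 =
      c / denom b L x₀ x / L ^ 2 := by
  have hD := (denom_pos b L x₀ hb x).ne'
  rw [deriv_deriv_div_denom L x₀ c hb hL, hbc]
  field_simp
  ring

end SolitonProfile

theorem stmt14_general (a x₀ : ℝ) :
    let u : ℝ → ℝ := fun x =>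
      Real.sqrt 2 * a /
        (Real.exp (-((x - x₀) / 4)) + 4 * a ^ 2 * Real.exp ((x - x₀) / 4))
    ∀ x : ℝ, -deriv (deriv u) x - (u x) ^ 3 = -(1 / 16) * u x := by
  intro u x
  have hbc : 8 * (4 * a ^ 2) = (4 : ℝ) ^ 2 * (Real.sqrt 2 * a) ^ 2 := by
    rw [mul_pow, Real.sq_sqrt zero_le_two]
    ring
  have h := SolitonProfile.deriv_deriv_add_cube 4 x₀ (Real.sqrt 2 * a) (by positivity)
    four_ne_zero hbc x
  change deriv (deriv u) x + u x ^ 3 = u x / 4 ^ 2 at h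
  linarith

theorem stmt14 (a x₀ : ℝ) (ha : a ≠ 0) :
    let u : ℝ → ℝ := fun x =>
      Real.sqrt 2 * a /
        (Real.exp (-((x - x₀) / 4)) + 4 * a ^ 2 * Real.exp ((x - x₀) / 4))
    ∀ x : ℝ, -deriv (deriv u) x - (u x) ^ 3 = -(1 / 16) * u x :=
  stmt14_general a x₀
end
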